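/- Let d ∈ (0, 1/2) and let r : ℕ → ℝ satisfy r_s · s^{1−2d} → K as s → ∞ for some constant K > 0. Then there exists a constant C > 0 such that for all n ≥ 1, the double sum ∑_{k=1}^{n} ∑_{s=1}^{n} |exp(r_{|k−s|}) − 1| ≤ C · n^{2d+1}. -/

import Mathlib

open Filter

private lemma abs_exp_sub_one_le' (x : ℝ) :
    |Real.exp x - 1| ≤ |x| * Real.exp |x| := by
  have h1 : x + 1 ≤ Real.exp x := Real.add_one_le_exp x
  have h2 : -|x| + 1 ≤ Real.exp (-|x|) := Real.add_one_le_exp _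
  have h3 : |x| + 1 ≤ Real.exp |x| := Real.add_one_le_exp _
  have hx : x ≤ |x| := le_abs_self x
  have hx' : -|x| ≤ x := neg_abs_le x
  have hmono : Real.exp x ≤ Real.exp |x| := Real.exp_le_exp.mpr hx
  have hpos : (0:ℝ) < Real.exp |x| := Real.exp_pos _
  have hinv : Real.exp (-|x|) = (Real.exp |x|)⁻¹ := Real.exp_neg _
  rw [abs_le]
  constructor
  · nlinarith [abs_nonneg x]
  · -- exp x - 1 ≤ exp |x| - 1 ≤ |x| * exp |x|
    have : Real.exp |x| - 1 ≤ |x| * Real.exp |x| := by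
      rw [hinv] at h2
      have := mul_le_mul_of_nonneg_right h2 hpos.le
      rw [inv_mul_cancel₀ hpos.ne'] at this
      nlinarith
    linarith

/-- Elementary bound `∑_{j=1}^n j^(p-1) ≤ n^p / p` for `0 < p ≤ 1`. -/
private lemma sum_rpow_le (p : ℝ) (hp0 : 0 < p) (hp1 : p ≤ 1) (n : ℕ) :
    ∑ j ∈ Finset.Icc 1 n, (j : ℝ) ^ (p - 1) ≤ (n : ℝ) ^ p / p := by
  have key : ∀ j : ℕ, 1 ≤ j → p * (j : ℝ) ^ (p - 1) ≤ (j : ℝ) ^ p - ((j : ℝ) - 1) ^ p := by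
    intro j hj
    have hjpos : (0:ℝ) < (j : ℝ) := by exact_mod_cast hj
    have hj1 : (1:ℝ) ≤ (j:ℝ) := by exact_mod_cast hj
    have h1j : (j : ℝ) - 1 = (j : ℝ) * (1 + (-1 / j)) := by
      field_simp
      ring
    have hbern : (1 + (-1 / (j:ℝ))) ^ p ≤ 1 + p * (-1 / (j:ℝ)) := by
      apply rpow_one_add_le_one_add_mul_self _ hp0.le hp1
      rw [neg_div, neg_le, neg_neg, div_le_one hjpos]
      exact hj1
    have hnn : (0:ℝ) ≤ 1 + (-1 / (j:ℝ)) := by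
      rw [neg_div, ← sub_eq_add_neg, sub_nonneg, div_le_one hjpos]
      exact hj1
    have hsub : (j:ℝ) ^ (p - 1) = (j:ℝ) ^ p / (j:ℝ) := by
      rw [Real.rpow_sub hjpos, Real.rpow_one]
    have : ((j:ℝ) - 1) ^ p ≤ (j:ℝ) ^ p - p * (j:ℝ) ^ (p - 1) := by
      calc ((j:ℝ) - 1) ^ p = (j:ℝ) ^ p * (1 + (-1 / j)) ^ p := by
            rw [h1j, Real.mul_rpow hjpos.le hnn]
        _ ≤ (j:ℝ) ^ p * (1 + p * (-1 / j)) :=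
            mul_le_mul_of_nonneg_left hbern (Real.rpow_nonneg hjpos.le p)
        _ = (j:ℝ) ^ p - p * ((j:ℝ) ^ p / j) := by ring
        _ = (j:ℝ) ^ p - p * (j:ℝ) ^ (p - 1) := by rw [hsub]
    linarith
  have hIcc : p * ∑ j ∈ Finset.Icc 1 n, (j : ℝ) ^ (p - 1) ≤ (n : ℝ) ^ p := by
    rw [Finset.mul_sum]
    have step : ∑ j ∈ Finset.Icc 1 n, p * (j : ℝ) ^ (p - 1)
        ≤ ∑ i ∈ Finset.range n, ((((i+1) : ℕ) : ℝ) ^ p - ((i : ℕ) : ℝ) ^ p) := by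
      rw [← Finset.Ico_add_one_right_eq_Icc, Finset.sum_Ico_eq_sum_range]
      apply Finset.sum_le_sum
      intro i _
      have := key (1 + i) (by omega)
      push_cast at this ⊢
      convert this using 2
      · rfl
      all_goals ring
    refine step.trans ?_
    rw [Finset.sum_range_sub (fun i => ((i:ℕ):ℝ) ^ p)]
    simp [Real.zero_rpow hp0.ne']
  rw [le_div_iff₀ hp0, mul_comm]
  exact hIcc

/-- Fiber-counting bound: at most two `s` give the same `|k - s|`. -/
private lemma fiber_bound (f : ℕ → ℝ) (hf : ∀ j, 0 ≤ f j) (n k : ℕ)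
    (hk : k ∈ Finset.Icc 1 n) :
    ∑ s ∈ Finset.Icc 1 n, f (((k : ℤ) - (s : ℤ)).natAbs)
      ≤ 2 * ∑ j ∈ Finset.range (n+1), f j := by
  obtain ⟨hk1, hkn⟩ := Finset.mem_Icc.mp hk
  rw [Finset.sum_comp f (fun s : ℕ => ((k : ℤ) - (s : ℤ)).natAbs)]
  have himg : Finset.image (fun s : ℕ => ((k : ℤ) - (s : ℤ)).natAbs) (Finset.Icc 1 n)
      ⊆ Finset.range (n+1) := by
    intro b hb
    obtain ⟨s, hs, hsb⟩ := Finset.mem_image.mp hb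
    obtain ⟨hs1, hsn⟩ := Finset.mem_Icc.mp hs
    rw [Finset.mem_range]
    omega
  have step1 : ∀ b ∈ Finset.image (fun s : ℕ => ((k : ℤ) - (s : ℤ)).natAbs) (Finset.Icc 1 n),
      (Finset.filter (fun a : ℕ => ((k : ℤ) - (a : ℤ)).natAbs = b) (Finset.Icc 1 n)).card • f b
        ≤ 2 * f b := by
    intro b _
    rw [nsmul_eq_mul]
    apply mul_le_mul_of_nonneg_right _ (hf b)
    have hsub : Finset.filter (fun a : ℕ => ((k : ℤ) - (a : ℤ)).natAbs = b) (Finset.Icc 1 n)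
        ⊆ {k - b, k + b} := by
      intro s hs
      rw [Finset.mem_filter] at hs
      obtain ⟨hs', heq⟩ := hs
      obtain ⟨hs1, hsn⟩ := Finset.mem_Icc.mp hs'
      simp only [Finset.mem_insert, Finset.mem_singleton]
      omega
    calc ((Finset.filter (fun a : ℕ => ((k : ℤ) - (a : ℤ)).natAbs = b) (Finset.Icc 1 n)).card : ℝ)
        ≤ (({k - b, k + b} : Finset ℕ).card : ℝ) := by
          exact_mod_cast Finset.card_le_card hsub
      _ ≤ 2 := by
          have h := Finset.card_insert_le (k - b) ({k + b} : Finset ℕ)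
          simp only [Finset.card_singleton] at h
          exact_mod_cast h
  refine le_trans (Finset.sum_le_sum step1) ?_
  rw [← Finset.mul_sum]
  apply mul_le_mul_of_nonneg_left _ (by norm_num : (0:ℝ) ≤ 2)
  exact Finset.sum_le_sum_of_subset_of_nonneg himg (fun i _ _ => hf i)

/-- Double sum bound: `∑_{k=1}^n ∑_{s=1}^n |e^{r_{|k-s|}} - 1| = O(n^{2d+1})`. -/
theorem double_sum_bound
    (d K : ℝ) (hd0 : 0 < d) (hd1 : d < 1/2) (hK : 0 < K)
    (r : ℕ → ℝ)
    (hr : Tendsto (fun s : ℕ => r s * (s : ℝ) ^ (1 - 2*d)) atTop (nhds K)) :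
    ∃ C > 0, ∀ n : ℕ, 1 ≤ n →
      ∑ k ∈ Finset.Icc 1 n, ∑ s ∈ Finset.Icc 1 n,
        |Real.exp (r (((k : ℤ) - (s : ℤ)).natAbs)) - 1|
        ≤ C * (n : ℝ) ^ (2*d + 1) := by
  set f : ℕ → ℝ := fun j => |Real.exp (r j) - 1| with hf_def
  have hf0 : ∀ j, 0 ≤ f j := fun j => abs_nonneg _
  -- Step 1: ∃ A > 0, ∀ j ≥ 1, f j ≤ A * j^(2d-1)
  obtain ⟨N₀, hN₀⟩ := (Metric.tendsto_atTop.mp hr) 1 one_pos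
  set N := max N₀ 1 with hN_def
  have hN1 : 1 ≤ N := le_max_right _ _
  set M : ℝ := ∑ j ∈ Finset.Icc 1 N, f j with hM_def
  have hM0 : 0 ≤ M := Finset.sum_nonneg (fun j _ => hf0 j)
  set A : ℝ := (K+1) * Real.exp (K+1) + M * (N:ℝ) ^ (1 - 2*d) + 1 with hA_def
  have hNpos : (0:ℝ) < (N:ℝ) := by exact_mod_cast hN1
  have hA0 : 0 < A := by
    have h1 : 0 < (K+1) * Real.exp (K+1) := by positivity
    have h2 : 0 ≤ M * (N:ℝ) ^ (1 - 2*d) := by positivity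
    linarith
  have hterm : ∀ j : ℕ, 1 ≤ j → f j ≤ A * (j:ℝ) ^ (2*d - 1) := by
    intro j hj
    have hjpos : (0:ℝ) < (j:ℝ) := by exact_mod_cast hj
    have hjrpow_pos : 0 < (j:ℝ) ^ (2*d - 1) := Real.rpow_pos_of_pos hjpos _
    by_cases hcase : N ≤ j
    · -- large j
      have hNj : N₀ ≤ j := le_trans (le_max_left _ _) hcase
      have hdist := hN₀ j hNj
      rw [Real.dist_eq] at hdist
      have habs : |r j| * (j:ℝ) ^ (1 - 2*d) ≤ K + 1 := by
        have : |r j * (j:ℝ) ^ (1 - 2*d)| ≤ |r j * (j:ℝ) ^ (1 - 2*d) - K| + |K| := by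
          calc |r j * (j:ℝ) ^ (1 - 2*d)| = |(r j * (j:ℝ) ^ (1 - 2*d) - K) + K| := by ring_nf
            _ ≤ _ := abs_add_le _ _
        rw [abs_mul, abs_of_nonneg (Real.rpow_nonneg hjpos.le _)] at this
        rw [abs_of_pos hK] at this
        linarith
      have hrj : |r j| ≤ (K + 1) * (j:ℝ) ^ (2*d - 1) := by
        have hprod : (j:ℝ) ^ (1 - 2*d) * (j:ℝ) ^ (2*d - 1) = 1 := by
          rw [← Real.rpow_add hjpos]
          norm_num
        calc |r j| = |r j| * ((j:ℝ) ^ (1 - 2*d) * (j:ℝ) ^ (2*d - 1)) := by rw [hprod, mul_one]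
          _ = (|r j| * (j:ℝ) ^ (1 - 2*d)) * (j:ℝ) ^ (2*d - 1) := by ring
          _ ≤ (K + 1) * (j:ℝ) ^ (2*d - 1) :=
              mul_le_mul_of_nonneg_right habs hjrpow_pos.le
      have hrpow_le_one : (j:ℝ) ^ (2*d - 1) ≤ 1 := by
        apply Real.rpow_le_one_of_one_le_of_nonpos (by exact_mod_cast hj)
        linarith
      have hrj1 : |r j| ≤ K + 1 := by
        calc |r j| ≤ (K + 1) * (j:ℝ) ^ (2*d - 1) := hrj
          _ ≤ (K + 1) * 1 := mul_le_mul_of_nonneg_left hrpow_le_one (by linarith)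
          _ = K + 1 := mul_one _
      calc f j ≤ |r j| * Real.exp |r j| := abs_exp_sub_one_le' _
        _ ≤ ((K + 1) * (j:ℝ) ^ (2*d - 1)) * Real.exp (K+1) := by
            apply mul_le_mul hrj (Real.exp_le_exp.mpr hrj1) (Real.exp_pos _).le
            positivity
        _ = ((K+1) * Real.exp (K+1)) * (j:ℝ) ^ (2*d - 1) := by ring
        _ ≤ A * (j:ℝ) ^ (2*d - 1) := by
            apply mul_le_mul_of_nonneg_right _ hjrpow_pos.le
            have h2 : 0 ≤ M * (N:ℝ) ^ (1 - 2*d) := by positivity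
            rw [hA_def]; linarith
    · -- small j: 1 ≤ j < N
      push_neg at hcase
      have hjN : j ≤ N := le_of_lt hcase
      have hfM : f j ≤ M := Finset.single_le_sum (fun i _ => hf0 i)
        (Finset.mem_Icc.mpr ⟨hj, hjN⟩)
      have hNrpow : (N:ℝ) ^ (2*d - 1) ≤ (j:ℝ) ^ (2*d - 1) := by
        apply Real.rpow_le_rpow_of_nonpos hjpos (by exact_mod_cast hjN) (by linarith)
      have hprodN : (N:ℝ) ^ (1 - 2*d) * (N:ℝ) ^ (2*d - 1) = 1 := by
        rw [← Real.rpow_add hNpos]; norm_num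
      calc f j ≤ M := hfM
        _ = (M * (N:ℝ) ^ (1 - 2*d)) * (N:ℝ) ^ (2*d - 1) := by
            rw [mul_assoc, hprodN, mul_one]
        _ ≤ (M * (N:ℝ) ^ (1 - 2*d)) * (j:ℝ) ^ (2*d - 1) := by
            apply mul_le_mul_of_nonneg_left hNrpow (by positivity)
        _ ≤ A * (j:ℝ) ^ (2*d - 1) := by
            apply mul_le_mul_of_nonneg_right _ hjrpow_pos.le
            have h1 : 0 < (K+1) * Real.exp (K+1) := by positivity
            rw [hA_def]; linarith
  -- Step 2: main estimate
  refine ⟨2 * f 0 + A / d + 1, by positivity, ?_⟩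
  intro n hn
  have hnpos : (0:ℝ) < (n:ℝ) := by exact_mod_cast hn
  have hd2 : 0 < 2*d := by linarith
  -- inner sum bound
  have hT : ∑ j ∈ Finset.range (n+1), f j ≤ f 0 + A * ((n:ℝ) ^ (2*d) / (2*d)) := by
    have hsplit : ∑ j ∈ Finset.range (n+1), f j = f 0 + ∑ j ∈ Finset.Icc 1 n, f j := by
      rw [Finset.sum_range_succ']
      rw [← Finset.Ico_add_one_right_eq_Icc, Finset.sum_Ico_eq_sum_range]
      simp [add_comm]
    rw [hsplit]
    have h1 : ∑ j ∈ Finset.Icc 1 n, f j ≤ A * ∑ j ∈ Finset.Icc 1 n, (j:ℝ) ^ (2*d - 1) := by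
      rw [Finset.mul_sum]
      apply Finset.sum_le_sum
      intro j hj
      exact hterm j (Finset.mem_Icc.mp hj).1
    have h2 := sum_rpow_le (2*d) hd2 (by linarith) n
    have h3 : A * ∑ j ∈ Finset.Icc 1 n, (j:ℝ) ^ (2*d - 1) ≤ A * ((n:ℝ) ^ (2*d) / (2*d)) :=
      mul_le_mul_of_nonneg_left h2 hA0.le
    exact add_le_add_right (h1.trans h3) (f 0)
  calc ∑ k ∈ Finset.Icc 1 n, ∑ s ∈ Finset.Icc 1 n, f (((k : ℤ) - (s : ℤ)).natAbs)
      ≤ ∑ k ∈ Finset.Icc 1 n, 2 * ∑ j ∈ Finset.range (n+1), f j := by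
        apply Finset.sum_le_sum
        intro k hk
        exact fiber_bound f hf0 n k hk
    _ = (n:ℝ) * (2 * ∑ j ∈ Finset.range (n+1), f j) := by
        rw [Finset.sum_const, Nat.card_Icc]
        simp [nsmul_eq_mul]
    _ ≤ (n:ℝ) * (2 * (f 0 + A * ((n:ℝ) ^ (2*d) / (2*d)))) := by
        apply mul_le_mul_of_nonneg_left _ hnpos.le
        linarith
    _ = 2 * f 0 * (n:ℝ) + (A/d) * ((n:ℝ) ^ (2*d) * (n:ℝ)) := by
        field_simp
    _ ≤ (2 * f 0 + A / d + 1) * (n:ℝ) ^ (2*d + 1) := by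
        have e1 : (n:ℝ) ^ (2*d) * (n:ℝ) = (n:ℝ) ^ (2*d + 1) := by
          rw [Real.rpow_add_one hnpos.ne']
        have e2 : (n:ℝ) ≤ (n:ℝ) ^ (2*d + 1) := by
          calc (n:ℝ) = (n:ℝ) ^ (1:ℝ) := (Real.rpow_one _).symm
            _ ≤ (n:ℝ) ^ (2*d + 1) := Real.rpow_le_rpow_of_exponent_le
                (by exact_mod_cast hn) (by linarith)
        have hrp : 0 < (n:ℝ) ^ (2*d + 1) := Real.rpow_pos_of_pos hnpos _
        have hAd : 0 < A / d := by positivity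
        rw [e1]
        nlinarith [hf0 0]
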